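/- arXiv:2110.04114 — 2 statements merged into one kernel-verified Lean document; each statement's English description precedes it below -/
import Mathlib

section
/- Let Φ(z) = νz with |ν| ≤ 1 and let Υ be an entire function on ℂ such that C_{Υ,Φ} is bounded on H_E(ζ). Then C_{Υ,Φ} is self-adjoint if and only if Υ(z) = \overline{Υ(0)} for all z ∈ ℂ and one of the following holds: (i) Υ(0) = 0, in which case Υ ≡ 0 and C_{Υ,Φ} = 0; or (ii) Υ(0) ≠ 0 and ν is a real number. -/
open Filter ContinuousLinearMap
open scoped ComplexConjugate

noncomputable section

/-- The weighted Hardy space of entire functions `H_E(ζ)`, realized as the Hilbert space of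
coefficient sequences: an entire function `g z = ∑ bₙ zⁿ` with `∑ |bₙ|² ζₙ² < ∞` is encoded by
the `ℓ²`-sequence `n ↦ bₙ * ζₙ`.  With this identification the `lp`-inner product
`⟪f, g⟫ = ∑ conj (f n) * g n` is exactly `∑ conj bₙ * cₙ * ζₙ²` (Mathlib's convention:
conjugate-linear in the first variable). -/
abbrev HE (_ζ : ℕ → ℝ) : Type := lp (fun _ : ℕ => ℂ) 2

/-- The `n`-th Taylor coefficient `bₙ` of an element of `H_E(ζ)`. -/
def HE.coeff (ζ : ℕ → ℝ) (f : HE ζ) (n : ℕ) : ℂ := f n / (ζ n : ℂ)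

/-- The entire function `z ↦ ∑ bₙ zⁿ` represented by an element of `H_E(ζ)`. -/
def HE.toFun (ζ : ℕ → ℝ) (f : HE ζ) : ℂ → ℂ := fun z => ∑' n, HE.coeff ζ f n * z ^ n

/-! Testing against the basis `eₖ = lp.single 2 k 1`, `T` is self-adjoint iff its matrix
`(T eᵢ) j` is Hermitian. Because `Φ 0 = 0`, `(T eₖ) 0 = 0` for `k ≠ 0`, so Hermitian symmetry forces
`T e₀ = d • e₀` with `d` real, and comparing the functions `T e₀` and `Υ · (e₀ ∘ Φ)` gives `Υ ≡ d`.
Then `T` is the diagonal operator `eₖ ↦ d νᵏ eₖ`, which is self-adjoint iff `d = 0` or `ν` is real. -/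

namespace lp

variable {ι 𝕜 : Type*} [RCLike 𝕜] [DecidableEq ι]

theorem continuousLinearMap_ext_single {p : ENNReal} [Fact (1 ≤ p)] (hp : p ≠ ⊤)
    {F : Type*} [NormedAddCommGroup F] [NormedSpace 𝕜 F] {S T : lp (fun _ : ι => 𝕜) p →L[𝕜] F}
    (h : ∀ i, S (lp.single p i 1) = T (lp.single p i 1)) : S = T := by
  have hsingle : ∀ (i : ι) (a : 𝕜), lp.single (E := fun _ : ι => 𝕜) p i a = a • lp.single p i 1 :=
    fun i a => by rw [← lp.single_smul, smul_eq_mul, mul_one]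
  ext1 f
  have hST : ∀ i, S (lp.single p i (f i)) = T (lp.single p i (f i)) := fun i => by
    rw [hsingle, map_smul, map_smul, h]
  refine ((lp.hasSum_single hp f).mapL S).unique ?_
  simpa only [hST] using (lp.hasSum_single hp f).mapL T

theorem isSelfAdjoint_iff_single_apply {T : lp (fun _ : ι => 𝕜) 2 →L[𝕜] lp (fun _ : ι => 𝕜) 2} :
    IsSelfAdjoint T ↔ ∀ i j, T (lp.single 2 i 1) j = conj (T (lp.single 2 j 1) i) := by
  have adjoint_single_apply :
      ∀ i j, (adjoint T) (lp.single 2 i 1) j = conj (T (lp.single 2 j 1) i) := fun i j => by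
    have := adjoint_inner_right T (lp.single 2 j 1) (lp.single 2 i 1)
    rw [lp.inner_single_left, lp.inner_single_right] at this
    simpa [RCLike.inner_apply] using this
  rw [isSelfAdjoint_iff']
  constructor
  · intro hT i j
    rw [← adjoint_single_apply, hT]
  · intro h
    refine continuousLinearMap_ext_single ENNReal.ofNat_ne_top fun i => lp.ext (funext fun j => ?_)
    exact (adjoint_single_apply i j).trans (h i j).symm

end lp

theorem eventually_one_le_of_tendsto_rpow_one_div {ζ : ℕ → ℝ} (hζ : ∀ n, 0 < ζ n)
    (hlim : Tendsto (fun n : ℕ => ζ n ^ ((1 : ℝ) / n)) atTop atTop) :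
    ∀ᶠ n in atTop, 1 ≤ ζ n := by
  filter_upwards [hlim.eventually_gt_atTop 1] with n hn
  by_contra! h
  exact hn.not_ge (Real.rpow_le_one (hζ n).le h.le (by positivity))

namespace HE

variable {ζ : ℕ → ℝ}

theorem toFun_single (k : ℕ) (a z : ℂ) : toFun ζ (lp.single 2 k a) z = a / ζ k * z ^ k := by
  rw [toFun, tsum_eq_single k fun n hn => by rw [coeff, lp.single_apply_ne _ _ _ hn]; simp,
    coeff, lp.single_apply_self]

theorem toFun_apply_zero (g : HE ζ) : toFun ζ g 0 = g 0 / ζ 0 := by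
  rw [toFun, tsum_eq_single 0 fun n hn => by simp [zero_pow hn], coeff, pow_zero, mul_one]

theorem one_le_radius_ofScalars_coeff (h1 : ∀ᶠ n in atTop, 1 ≤ ζ n) (g : HE ζ) :
    1 ≤ (FormalMultilinearSeries.ofScalars ℂ (coeff ζ g)).radius := by
  have hbound : ∀ᶠ n in atTop,
      ‖FormalMultilinearSeries.ofScalars ℂ (coeff ζ g) n‖ * ((1 : NNReal) : ℝ) ^ n ≤ ‖g‖ := by
    filter_upwards [h1] with n hn
    rw [FormalMultilinearSeries.ofScalars_norm, NNReal.coe_one, one_pow, mul_one, coeff, norm_div,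
      Complex.norm_real, Real.norm_of_nonneg (zero_le_one.trans hn)]
    exact (div_le_self (norm_nonneg _) hn).trans (lp.norm_apply_le_norm two_ne_zero g n)
  simpa using FormalMultilinearSeries.le_radius_of_eventually_le _ _ hbound

theorem hasFPowerSeriesAt_toFun (h1 : ∀ᶠ n in atTop, 1 ≤ ζ n) (g : HE ζ) :
    HasFPowerSeriesAt (toFun ζ g) (FormalMultilinearSeries.ofScalars ℂ (coeff ζ g)) 0 := by
  have hsum : (FormalMultilinearSeries.ofScalars ℂ (coeff ζ g)).sum = toFun ζ g :=
    FormalMultilinearSeries.ofScalarsSum_eq_tsum _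
  rw [← hsum]
  exact (FormalMultilinearSeries.hasFPowerSeriesOnBall _
    (zero_lt_one.trans_le (one_le_radius_ofScalars_coeff h1 g))).hasFPowerSeriesAt

theorem toFun_injective (hζ : ∀ n, ζ n ≠ 0) (h1 : ∀ᶠ n in atTop, 1 ≤ ζ n) :
    Function.Injective (toFun ζ) := by
  intro g h hgh
  have hcoeff : coeff ζ g = coeff ζ h := FormalMultilinearSeries.ofScalars_series_injective ℂ ℂ <|
    (hasFPowerSeriesAt_toFun h1 g).eq_formalMultilinearSeries (hgh ▸ hasFPowerSeriesAt_toFun h1 h)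
  exact lp.ext <| funext fun n =>
    (div_left_inj' (Complex.ofReal_ne_zero.mpr (hζ n))).mp (congrFun hcoeff n)

variable {Υ Φ : ℂ → ℂ} {T : HE ζ →L[ℂ] HE ζ}

def IsWeightedComposition (ζ : ℕ → ℝ) (Υ Φ : ℂ → ℂ) (T : HE ζ →L[ℂ] HE ζ) : Prop :=
  ∀ f z, toFun ζ (T f) z = Υ z * toFun ζ f (Φ z)

namespace IsWeightedComposition

theorem eq_zero (hinj : Function.Injective (toFun ζ)) (hT : IsWeightedComposition ζ Υ Φ T)
    (hΥ : ∀ z, Υ z = 0) : T = 0 := by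
  ext1 f
  refine hinj (funext fun z => ?_)
  rw [hT, hΥ, zero_mul, zero_apply]
  simp [toFun, coeff]

theorem apply_single_apply_zero (hζ0 : ζ 0 ≠ 0) (hT : IsWeightedComposition ζ Υ Φ T)
    (hΦ : Φ 0 = 0) {k : ℕ} (hk : k ≠ 0) : T (lp.single 2 k 1) 0 = 0 := by
  have h := hT (lp.single 2 k 1) 0
  rw [toFun_apply_zero, toFun_single, hΦ, zero_pow hk, mul_zero, mul_zero, div_eq_zero_iff] at h
  exact h.resolve_right (Complex.ofReal_ne_zero.mpr hζ0)

theorem apply_single_of_const {ν c : ℂ} (hinj : Function.Injective (toFun ζ))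
    (hT : IsWeightedComposition ζ Υ (ν * ·) T) (hΥ : ∀ z, Υ z = c) (k : ℕ) :
    T (lp.single 2 k 1) = lp.single 2 k (c * ν ^ k) := by
  refine hinj (funext fun z => ?_)
  rw [hT, hΥ, toFun_single, toFun_single]
  ring

theorem eq_conj_apply_zero_of_isSelfAdjoint (hζ0 : ζ 0 ≠ 0) (hT : IsWeightedComposition ζ Υ Φ T)
    (hΦ : Φ 0 = 0) (hsa : IsSelfAdjoint T) (z : ℂ) : Υ z = conj (Υ 0) := by
  have hsymm := lp.isSelfAdjoint_iff_single_apply.mp hsa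
  set d := T (lp.single 2 0 1) 0
  have hd : conj d = d := (hsymm 0 0).symm
  have he0 : T (lp.single 2 0 1) = lp.single 2 0 d := by
    refine lp.ext (funext fun k => ?_)
    rcases eq_or_ne k 0 with rfl | hk
    · rw [lp.single_apply_self]
    · rw [hsymm, apply_single_apply_zero hζ0 hT hΦ hk, map_zero, lp.single_apply_ne _ _ _ hk]
  have hΥd : ∀ w, Υ w = d := fun w => by
    have h := hT (lp.single 2 0 1) w
    rw [he0, toFun_single, toFun_single, pow_zero, pow_zero, mul_one, mul_one, ← mul_div_assoc,
      mul_one, div_left_inj' (Complex.ofReal_ne_zero.mpr hζ0)] at h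
    exact h.symm
  rw [hΥd, hΥd, hd]

theorem conj_eq_of_isSelfAdjoint {ν c : ℂ} (hinj : Function.Injective (toFun ζ))
    (hT : IsWeightedComposition ζ Υ (ν * ·) T) (hΥ : ∀ z, Υ z = c) (hc : conj c = c)
    (hc0 : c ≠ 0) (hsa : IsSelfAdjoint T) : conj ν = ν := by
  have h := lp.isSelfAdjoint_iff_single_apply.mp hsa 1 1
  rw [apply_single_of_const hinj hT hΥ, lp.single_apply_self, map_mul, hc, pow_one] at h
  exact (mul_left_cancel₀ hc0 h).symm

theorem isSelfAdjoint_of_conj_eq {ν c : ℂ} (hinj : Function.Injective (toFun ζ))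
    (hT : IsWeightedComposition ζ Υ (ν * ·) T) (hΥ : ∀ z, Υ z = c) (hc : conj c = c)
    (hν : conj ν = ν) : IsSelfAdjoint T := by
  refine lp.isSelfAdjoint_iff_single_apply.mpr fun i j => ?_
  simp only [apply_single_of_const hinj hT hΥ]
  rcases eq_or_ne i j with rfl | hij
  · rw [lp.single_apply_self, map_mul, map_pow, hc, hν]
  · rw [lp.single_apply_ne _ _ _ hij.symm, lp.single_apply_ne _ _ _ hij, map_zero]

end IsWeightedComposition

end HE

theorem weighted_composition_selfAdjoint_iff_linear_symbol_general
    (ζ : ℕ → ℝ) (hζ : ∀ n, 0 < ζ n)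
    (hlim : Tendsto (fun n : ℕ => (ζ n) ^ ((1 : ℝ) / n)) atTop atTop)
    (ν : ℂ)
    (Υ : ℂ → ℂ)
    (T : HE ζ →L[ℂ] HE ζ)
    (hT : ∀ f : HE ζ, ∀ z : ℂ, HE.toFun ζ (T f) z = Υ z * HE.toFun ζ f (ν * z)) :
    IsSelfAdjoint T ↔
      ((∀ z : ℂ, Υ z = conj (Υ 0)) ∧
       ((Υ 0 = 0 ∧ (∀ z : ℂ, Υ z = 0) ∧ T = 0) ∨
        (Υ 0 ≠ 0 ∧ ∃ r : ℝ, ν = (r : ℂ)))) := by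
  have hT : HE.IsWeightedComposition ζ Υ (ν * ·) T := hT
  have hinj := HE.toFun_injective (fun n => (hζ n).ne')
    (eventually_one_le_of_tendsto_rpow_one_div hζ hlim)
  constructor
  · intro hsa
    have hΥ := hT.eq_conj_apply_zero_of_isSelfAdjoint (hζ 0).ne' (mul_zero ν) hsa
    have hreal : conj (conj (Υ 0)) = conj (Υ 0) := by rw [Complex.conj_conj, ← hΥ 0]
    refine ⟨hΥ, ?_⟩
    by_cases h0 : Υ 0 = 0
    · have hzero : ∀ z, Υ z = 0 := fun z => by rw [hΥ, h0, map_zero]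
      exact .inl ⟨h0, hzero, hT.eq_zero hinj hzero⟩
    · exact .inr ⟨h0, Complex.conj_eq_iff_real.mp <|
        hT.conj_eq_of_isSelfAdjoint hinj hΥ hreal ((map_ne_zero _).mpr h0) hsa⟩
  · rintro ⟨hΥ, ⟨-, -, rfl⟩ | ⟨-, r, rfl⟩⟩
    · exact .zero _
    · have hreal : conj (conj (Υ 0)) = conj (Υ 0) := by rw [Complex.conj_conj, ← hΥ 0]
      exact hT.isSelfAdjoint_of_conj_eq hinj hΥ hreal (Complex.conj_ofReal r)

/-- For `Φ z = ν z` with `|ν| ≤ 1` and entire `Υ` with `C_{Υ,Φ}` bounded on `H_E(ζ)`: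
`C_{Υ,Φ}` is self-adjoint iff `Υ z = conj (Υ 0)` for all `z`, and either (i) `Υ 0 = 0`,
in which case `Υ ≡ 0` and `C_{Υ,Φ} = 0`, or (ii) `Υ 0 ≠ 0` and `ν` is real. -/
theorem weighted_composition_selfAdjoint_iff_linear_symbol
    (ζ : ℕ → ℝ) (hζ : ∀ n, 0 < ζ n)
    (hlim : Tendsto (fun n : ℕ => (ζ n) ^ ((1 : ℝ) / n)) atTop atTop)
    (ν : ℂ) (hν : ‖ν‖ ≤ 1)
    (Υ : ℂ → ℂ) (hΥ : Differentiable ℂ Υ)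
    (T : HE ζ →L[ℂ] HE ζ)
    (hT : ∀ f : HE ζ, ∀ z : ℂ, HE.toFun ζ (T f) z = Υ z * HE.toFun ζ f (ν * z)) :
    IsSelfAdjoint T ↔
      ((∀ z : ℂ, Υ z = conj (Υ 0)) ∧
       ((Υ 0 = 0 ∧ (∀ z : ℂ, Υ z = 0) ∧ T = 0) ∨
        (Υ 0 ≠ 0 ∧ ∃ r : ℝ, ν = (r : ℂ)))) :=
  weighted_composition_selfAdjoint_iff_linear_symbol_general ζ hζ hlim ν Υ T hT
end
end

section
/- Let Φ(z) = d be a constant function on ℂ and let Υ be an entire function on ℂ such that C_{Υ,Φ} is bounded on H_E(ζ). Then C_{Υ,Φ} is self-adjoint if and only if Υ(z) = α K_{Φ(0)}(z) for all z ∈ ℂ, where α = ζ₀² \overline{Υ(0)} is a real number. -/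
/-
Everything follows from the reproducing property `⟪K p, f⟫ = f(p)`. If `T` is self-adjoint,
comparing `⟪K z, T (K w)⟫ = Υ z · K_w(d)` with `⟪T (K z), K w⟫` at `w = 0` (where `K_0 ≡ 1/ζ₀²`)
gives `Υ = α K_d`, and `z = 0` then shows that `Υ 0` is real. Conversely, `Υ = α K_d` makes
`T f = α ⟪K_d, f⟫ K_d`, a real multiple of the rank-one operator `K_d ⊗ K_d`. To identify `T`
from its values, note that the Taylor series of `f` at `z` is the `ℓ²` series of `⟪K z, f⟫`,
so it converges everywhere, and power-series coefficients are unique.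
-/

open Filter ContinuousLinearMap
open scoped ComplexConjugate

noncomputable section

open InnerProductSpace

lemma coeff_eq_zero_of_hasSum_zero {𝕜 : Type*} [NontriviallyNormedField 𝕜] {a : ℕ → 𝕜}
    (h : ∀ᶠ z in nhds 0, HasSum (fun n => a n * z ^ n) 0) (n : ℕ) : a n = 0 := by
  have hp : HasFPowerSeriesAt (0 : 𝕜 → 𝕜) (FormalMultilinearSeries.ofScalars 𝕜 a) 0 := by
    rw [hasFPowerSeriesAt_iff]
    filter_upwards [h] with z hz
    simpa [FormalMultilinearSeries.coeff_ofScalars, mul_comm] using hz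
  rw [← FormalMultilinearSeries.ofScalars_eq_zero (E := 𝕜), hp.eq_zero]
  rfl

namespace HE

variable {ζ : ℕ → ℝ}

lemma toFun_apply_zero_s8 (f : HE ζ) : HE.toFun ζ f 0 = HE.coeff ζ f 0 := by
  rw [HE.toFun, tsum_eq_single 0 fun n hn => by simp [zero_pow hn]]
  simp

variable (hζ : ∀ n, 0 < ζ n) {K : ℂ → HE ζ}
  (hK : ∀ p n, HE.coeff ζ (K p) n = (conj p) ^ n / (ζ n : ℂ) ^ 2)

include hK in
lemma toFun_K_apply_zero (p : ℂ) : HE.toFun ζ (K p) 0 = 1 / (ζ 0 : ℂ) ^ 2 := by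
  rw [toFun_apply_zero_s8, hK, pow_zero]

include hζ hK

lemma hasSum_inner_K (p : ℂ) (f : HE ζ) :
    HasSum (fun n => HE.coeff ζ f n * p ^ n) (inner ℂ (K p) f) := by
  have hterm (n : ℕ) : inner ℂ ((K p : ℕ → ℂ) n) ((f : ℕ → ℂ) n) = HE.coeff ζ f n * p ^ n := by
    have hζn : (ζ n : ℂ) ≠ 0 := by exact_mod_cast (hζ n).ne'
    have hKn : K p n = conj p ^ n / ζ n := by
      rw [← div_mul_cancel₀ (K p n) hζn, ← HE.coeff, hK]
      field_simp
    rw [RCLike.inner_apply, hKn, HE.coeff, map_div₀, map_pow, Complex.conj_conj,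
      Complex.conj_ofReal]
    ring
  simpa only [hterm] using lp.hasSum_inner (𝕜 := ℂ) (K p) f

lemma inner_K (p : ℂ) (f : HE ζ) : inner ℂ (K p) f = HE.toFun ζ f p :=
  (hasSum_inner_K hζ hK p f).tsum_eq.symm

lemma conj_toFun_K (z w : ℂ) : conj (HE.toFun ζ (K z) w) = HE.toFun ζ (K w) z := by
  rw [← inner_K hζ hK, ← inner_K hζ hK, inner_conj_symm]

lemma toFun_K_zero (w : ℂ) : HE.toFun ζ (K 0) w = 1 / (ζ 0 : ℂ) ^ 2 := by
  rw [← conj_toFun_K hζ hK, toFun_K_apply_zero hK, map_div₀, map_one, map_pow,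
    Complex.conj_ofReal]

lemma ext_of_toFun {f g : HE ζ} (h : ∀ z, HE.toFun ζ f z = HE.toFun ζ g z) : f = g := by
  have hcoeff : ∀ n, HE.coeff ζ (f - g) n = 0 :=
    coeff_eq_zero_of_hasSum_zero <| Eventually.of_forall fun z => by
      have hs := hasSum_inner_K hζ hK z (f - g)
      rwa [inner_sub_right, inner_K hζ hK, inner_K hζ hK, h, sub_self] at hs
  ext n
  have hζn : (ζ n : ℂ) ≠ 0 := by exact_mod_cast (hζ n).ne'
  simpa [HE.coeff, hζn, sub_eq_zero] using hcoeff n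

variable (d : ℂ) (Υ : ℂ → ℂ) (T : HE ζ →L[ℂ] HE ζ)
  (hT : ∀ f : HE ζ, ∀ z : ℂ, HE.toFun ζ (T f) z = Υ z * HE.toFun ζ f d)
include hT

lemma inner_K_apply_K (z w : ℂ) :
    inner ℂ (K z) (T (K w)) = Υ z * HE.toFun ζ (K w) d := by
  rw [inner_K hζ hK, hT]

lemma eq_mul_toFun_K_of_isSelfAdjoint (hsa : IsSelfAdjoint T) (z : ℂ) :
    Υ z = (ζ 0 : ℂ) ^ 2 * conj (Υ 0) * HE.toFun ζ (K d) z := by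
  have hsymm : Υ z * HE.toFun ζ (K 0) d = conj (Υ 0) * HE.toFun ζ (K d) z :=
    calc Υ z * HE.toFun ζ (K 0) d = inner ℂ (K z) (T (K 0)) :=
          (inner_K_apply_K hζ hK d Υ T hT z 0).symm
      _ = inner ℂ (T (K z)) (K 0) := (hsa.isSymmetric (K z) (K 0)).symm
      _ = conj (inner ℂ (K 0) (T (K z))) := (inner_conj_symm _ _).symm
      _ = conj (Υ 0) * HE.toFun ζ (K d) z := by
          rw [inner_K_apply_K hζ hK d Υ T hT, map_mul, conj_toFun_K hζ hK]
  have hζ0 : (ζ 0 : ℂ) ≠ 0 := by exact_mod_cast (hζ 0).ne'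
  rw [toFun_K_zero hζ hK] at hsymm
  field_simp at hsymm
  rw [hsymm]

lemma conj_apply_zero_of_isSelfAdjoint (hsa : IsSelfAdjoint T) : conj (Υ 0) = Υ 0 := by
  have h := eq_mul_toFun_K_of_isSelfAdjoint hζ hK d Υ T hT hsa 0
  have hζ0 : (ζ 0 : ℂ) ≠ 0 := by exact_mod_cast (hζ 0).ne'
  rw [toFun_K_apply_zero hK] at h
  field_simp at h
  exact h.symm

lemma eq_smul_rankOne_K {α : ℂ} (hΥ : ∀ z, Υ z = α * HE.toFun ζ (K d) z) :
    T = α • rankOne ℂ (K d) (K d) := by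
  ext1 f
  refine ext_of_toFun hζ hK fun z => ?_
  simp only [hT, hΥ, smul_apply, rankOne_apply, ← inner_K hζ hK, inner_smul_right]
  ring

end HE

theorem weighted_composition_selfAdjoint_iff_constant_symbol_general
    (ζ : ℕ → ℝ) (hζ : ∀ n, 0 < ζ n)
    (d : ℂ)
    (Υ : ℂ → ℂ)
    (K : ℂ → HE ζ) (hK : ∀ p n, HE.coeff ζ (K p) n = (conj p) ^ n / (ζ n : ℂ) ^ 2)
    (T : HE ζ →L[ℂ] HE ζ)
    (hT : ∀ f : HE ζ, ∀ z : ℂ, HE.toFun ζ (T f) z = Υ z * HE.toFun ζ f d) :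
    IsSelfAdjoint T ↔
      ((∀ z : ℂ, Υ z = (ζ 0 : ℂ) ^ 2 * conj (Υ 0) * HE.toFun ζ (K d) z) ∧
       ∃ r : ℝ, (ζ 0 : ℂ) ^ 2 * conj (Υ 0) = (r : ℂ)) := by
  constructor
  · intro hsa
    refine ⟨HE.eq_mul_toFun_K_of_isSelfAdjoint hζ hK d Υ T hT hsa,
      Complex.conj_eq_iff_real.mp ?_⟩
    rw [map_mul, Complex.conj_conj, HE.conj_apply_zero_of_isSelfAdjoint hζ hK d Υ T hT hsa,
      map_pow, Complex.conj_ofReal]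
  · rintro ⟨hΥ, r, hr⟩
    rw [HE.eq_smul_rankOne_K hζ hK d Υ T hT hΥ, hr]
    exact IsSelfAdjoint.smul (Complex.conj_ofReal r)
      (isSelfAdjoint_iff_isSymmetric.mpr (isSymmetric_rankOne_self (K d)))

/-- For the constant symbol `Φ ≡ d` and entire `Υ` with `C_{Υ,Φ}` bounded on `H_E(ζ)`:
`C_{Υ,Φ}` is self-adjoint iff `Υ z = α K_{Φ 0} z` for all `z`, where
`α = ζ₀² conj (Υ 0)` is a real number. -/
theorem weighted_composition_selfAdjoint_iff_constant_symbol
    (ζ : ℕ → ℝ) (hζ : ∀ n, 0 < ζ n)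
    (hlim : Tendsto (fun n : ℕ => (ζ n) ^ ((1 : ℝ) / n)) atTop atTop)
    (d : ℂ)
    (Υ : ℂ → ℂ) (hΥ : Differentiable ℂ Υ)
    (K : ℂ → HE ζ) (hK : ∀ p n, HE.coeff ζ (K p) n = (conj p) ^ n / (ζ n : ℂ) ^ 2)
    (T : HE ζ →L[ℂ] HE ζ)
    (hT : ∀ f : HE ζ, ∀ z : ℂ, HE.toFun ζ (T f) z = Υ z * HE.toFun ζ f d) :
    IsSelfAdjoint T ↔
      ((∀ z : ℂ, Υ z = (ζ 0 : ℂ) ^ 2 * conj (Υ 0) * HE.toFun ζ (K d) z) ∧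
       ∃ r : ℝ, (ζ 0 : ℂ) ^ 2 * conj (Υ 0) = (r : ℂ)) :=
  weighted_composition_selfAdjoint_iff_constant_symbol_general ζ hζ d Υ K hK T hT
end
end
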